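/- arXiv:1306.3795 — 2 statements merged into one kernel-verified Lean document; each statement's English description precedes it below -/
import Mathlib

section
/- In the well-pointed endofunctor setting below, for every object X of C the morphism T.map (α.app X) : T X ⟶ T (U X) is an isomorphism. (This is the general form of the paper's proposition that the natural transformation (−)^B ∘ Id → (−)^B ∘ U induced by α is an equivalence.) -/
/-!
Well-pointedness gives `Uⁿ(α_X) = α_{Uⁿ X}`. Hence, after identifying `Uⁿ(U X)` with
`Uⁿ⁺¹ X`, the map of chains `ch(X) ⟶ ch(U X)` induced by `α_X` becomes the family of transition
maps of `ch(X)` into its shift `n ↦ ch(X)(n + 1)`. Since `n ↦ n + 1` is final, the colimit of the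
shifted chain is again `T X`, and the map induced by the transition maps is inverse to the
comparison `colimit.pre`; so `T(α_X)` is an isomorphism.
-/

open CategoryTheory CategoryTheory.Limits

universe v u

variable {C : Type u} [Category.{v} C]

def funIter (U : C ⥤ C) : ℕ → C ⥤ C
  | 0 => 𝟭 C
  | n + 1 => funIter U n ⋙ U

lemma funIter_obj_comm (U : C ⥤ C) (n : ℕ) (X : C) :
    (funIter U n).obj (U.obj X) = U.obj ((funIter U n).obj X) := by
  induction n with
  | zero => rfl
  | succ n ih =>
      show U.obj ((funIter U n).obj (U.obj X)) = U.obj (U.obj ((funIter U n).obj X))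
      rw [ih]

/-- The chain `X ⟶ U X ⟶ U² X ⟶ ⋯` with transition maps `α.app (Uⁿ X)`. -/
def chain (U : C ⥤ C) (α : 𝟭 C ⟶ U) (A : C) : ℕ ⥤ C :=
  Functor.ofSequence (X := fun n => (funIter U n).obj A)
    (fun n => α.app ((funIter U n).obj A))

/-- The functorial action of the chain construction. -/
def chainMap (U : C ⥤ C) (α : 𝟭 C ⟶ U) {A B : C} (f : A ⟶ B) :
    chain U α A ⟶ chain U α B :=
  NatTrans.ofSequence (F := chain U α A) (G := chain U α B)
    (fun n => (funIter U n).map f)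
    (fun n => by
      simp only [chain]
      erw [Functor.ofSequence_map_homOfLE_succ, Functor.ofSequence_map_homOfLE_succ]
      exact (α.naturality ((funIter U n).map f)).symm)

variable [HasColimitsOfShape ℕ C]

/-- `T X`, the colimit of the chain `X ⟶ U X ⟶ U² X ⟶ ⋯`. -/
noncomputable def Tobj (U : C ⥤ C) (α : 𝟭 C ⟶ U) (A : C) : C :=
  colimit (chain U α A)

/-- The action of `T` on morphisms. -/
noncomputable def Tmap (U : C ⥤ C) (α : 𝟭 C ⟶ U) {A B : C} (f : A ⟶ B) :
    Tobj U α A ⟶ Tobj U α B :=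
  colimMap (chainMap U α f)

/-- The component `ι.app A : A ⟶ T A`, the colimit cocone leg at stage `0`. -/
noncomputable def tUnit (U : C ⥤ C) (α : 𝟭 C ⟶ U) (A : C) : A ⟶ Tobj U α A :=
  colimit.ι (chain U α A) 0

abbrev succFunctor : ℕ ⥤ ℕ := Monotone.functor (f := (· + 1)) fun _ _ => Nat.succ_le_succ

instance succFunctor_final : succFunctor.Final :=
  (Monotone.final_functor_iff _).2 fun n => ⟨n, n.le_succ⟩

@[simps]
def succTransition (F : ℕ ⥤ C) : F ⟶ succFunctor ⋙ F where
  app n := F.map (homOfLE n.le_succ)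
  naturality _ _ _ := by simp only [Functor.comp_map, ← F.map_comp]; rfl

lemma colimMap_succTransition_comp_pre (F : ℕ ⥤ C) :
    colimMap (succTransition F) ≫ colimit.pre F succFunctor = 𝟙 (colimit F) := by
  ext n
  simp

instance isIso_colimMap_succTransition (F : ℕ ⥤ C) : IsIso (colimMap (succTransition F)) := by
  have : IsIso (colimMap (succTransition F) ≫ colimit.pre F succFunctor) := by
    rw [colimMap_succTransition_comp_pre]
    infer_instance
  exact IsIso.of_isIso_comp_right _ (colimit.pre F succFunctor)

omit [HasColimitsOfShape ℕ C] in
lemma funIter_map_app (U : C ⥤ C) (α : 𝟭 C ⟶ U)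
    (hwp : ∀ X : C, U.map (α.app X) = α.app (U.obj X)) (n : ℕ) (X : C) :
    (funIter U n).map (α.app X) =
      α.app ((funIter U n).obj X) ≫ eqToHom (funIter_obj_comm U n X).symm := by
  induction n with
  | zero => simp [funIter]
  | succ n ih =>
    change U.map _ = _
    rw [ih, U.map_comp, eqToHom_map, hwp]
    rfl

def chainSuccHom (U : C ⥤ C) (α : 𝟭 C ⟶ U) (X : C) :
    chain U α (U.obj X) ⟶ succFunctor ⋙ chain U α X :=
  NatTrans.ofSequence (fun n => eqToHom (funIter_obj_comm U n X)) fun n => by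
    dsimp only [chain, Functor.comp_map]
    erw [Functor.ofSequence_map_homOfLE_succ, Functor.ofSequence_map_homOfLE_succ]
    exact eqToHom_naturality (fun Y => α.app Y) (funIter_obj_comm U n X)

instance (U : C ⥤ C) (α : 𝟭 C ⟶ U) (X : C) : IsIso (chainSuccHom U α X) :=
  have (n : ℕ) : IsIso ((chainSuccHom U α X).app n) := (eqToIso _).isIso_hom
  NatIso.isIso_of_isIso_app _

omit [HasColimitsOfShape ℕ C] in
lemma chainMap_app_comp_chainSuccHom (U : C ⥤ C) (α : 𝟭 C ⟶ U)
    (hwp : ∀ X : C, U.map (α.app X) = α.app (U.obj X)) (X : C) :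
    chainMap U α (α.app X) ≫ chainSuccHom U α X = succTransition (chain U α X) := by
  ext n
  change (funIter U n).map (α.app X) ≫ eqToHom (funIter_obj_comm U n X) =
    (chain U α X).map (homOfLE (n.le_add_right 1))
  rw [funIter_map_app U α hwp, Category.assoc, eqToHom_trans, eqToHom_refl, Category.comp_id]
  exact (Functor.ofSequence_map_homOfLE_succ (fun n => α.app ((funIter U n).obj X)) n).symm

theorem stmt1_general (U : C ⥤ C) (α : 𝟭 C ⟶ U)
    (hwp : ∀ X : C, U.map (α.app X) = α.app (U.obj X)) (X : C) :
    IsIso (Tmap U α (α.app X)) := by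
  -- unfolding `Tmap` lets instance search see the `colimMap`s below
  change IsIso (colimMap (chainMap U α (α.app X)))
  have hcomp : colimMap (chainMap U α (α.app X)) ≫ colimMap (chainSuccHom U α X) =
      colimMap (succTransition (chain U α X)) := by
    rw [← chainMap_app_comp_chainSuccHom U α hwp X]
    exact (colim.map_comp _ _).symm
  have : IsIso (colimMap (chainMap U α (α.app X)) ≫ colimMap (chainSuccHom U α X)) := by
    rw [hcomp]
    infer_instance
  exact IsIso.of_isIso_comp_right _ (colimMap (chainSuccHom U α X))

theorem stmt1 (U : C ⥤ C) (α : 𝟭 C ⟶ U)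
    [PreservesColimitsOfShape ℕ U]
    (hwp : ∀ X : C, U.map (α.app X) = α.app (U.obj X)) (X : C) :
    IsIso (Tmap U α (α.app X)) :=
  stmt1_general U α hwp X
end

section
/- In the well-pointed endofunctor setting below, T exhibits a reflective localization of C onto the ι-local objects: for every object X of C and every object Y of C such that ι.app Y : Y ⟶ T Y is an isomorphism, the map Hom_C(T X, Y) ⟶ Hom_C(X, Y) given by precomposition with ι.app X (g ↦ ι.app X ≫ g) is a bijection. -/
/-! For an `ι`-local `Y`, the stage-one leg followed by `(ι_Y)⁻¹` is a retraction of `α_Y`, and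
well-pointedness upgrades it to an inverse. Once `α_Y` is invertible, naturality of `α` together
with `U (α_Z) = α_{U Z}` shows that a map `U Z ⟶ Y` is determined by its restriction along `α_Z`;
inductively, a map `T X ⟶ Y` is determined by its stage-zero leg. A preimage of `f : X ⟶ Y` is
`T f ≫ (ι_Y)⁻¹`. -/

open CategoryTheory CategoryTheory.Limits

universe v u

variable {C : Type u} [Category.{v} C]

variable [HasColimitsOfShape ℕ C]

section WellPointed

variable {D : Type*} [Category D] {U : D ⥤ D} (α : 𝟭 D ⟶ U)

lemma isIso_app_of_retraction {Y : D} (hwp : U.map (α.app Y) = α.app (U.obj Y))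
    (r : U.obj Y ⟶ Y) (hr : α.app Y ≫ r = 𝟙 Y) : IsIso (α.app Y) := by
  refine ⟨r, hr, ?_⟩
  calc r ≫ α.app Y = α.app (U.obj Y) ≫ U.map r := α.naturality r
    _ = U.map (α.app Y ≫ r) := by rw [← hwp, U.map_comp]
    _ = 𝟙 (U.obj Y) := by rw [hr]; exact U.map_id Y

lemma hom_ext_of_isIso_app {Z Y : D} (hwp : U.map (α.app Z) = α.app (U.obj Z))
    [IsIso (α.app Y)] {k k' : U.obj Z ⟶ Y} (h : α.app Z ≫ k = α.app Z ≫ k') : k = k' := by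
  have hcomp (k : U.obj Z ⟶ Y) : k ≫ α.app Y = U.map (α.app Z ≫ k) := by
    rw [U.map_comp, hwp]
    exact α.naturality k
  rw [← cancel_mono (α.app Y), hcomp, hcomp, h]

end WellPointed

section Localization

variable (U : C ⥤ C) (α : 𝟭 C ⟶ U)

lemma app_comp_colimit_ι_chain_succ (A : C) (n : ℕ) :
    α.app ((funIter U n).obj A) ≫ colimit.ι (chain U α A) (n + 1) =
      colimit.ι (chain U α A) n := by
  have w := colimit.w (chain U α A) (homOfLE (Nat.le_add_right n 1))
  rwa [show (chain U α A).map (homOfLE (Nat.le_add_right n 1)) = α.app ((funIter U n).obj A) from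
    Functor.ofSequence_map_homOfLE_succ _ n] at w

lemma isIso_app_of_isIso_tUnit {Y : C} (hwp : U.map (α.app Y) = α.app (U.obj Y))
    (hY : IsIso (tUnit U α Y)) : IsIso (α.app Y) := by
  obtain ⟨s, hs, -⟩ := hY
  exact isIso_app_of_retraction α hwp (colimit.ι (chain U α Y) 1 ≫ s) <|
    (Category.assoc _ _ _).symm.trans
      ((congrArg (· ≫ s) (app_comp_colimit_ι_chain_succ U α Y 0)).trans hs)

lemma colimit_chain_hom_ext (hwp : ∀ Z : C, U.map (α.app Z) = α.app (U.obj Z)) {X Y : C}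
    [IsIso (α.app Y)] {g g' : colimit (chain U α X) ⟶ Y}
    (h : colimit.ι (chain U α X) 0 ≫ g = colimit.ι (chain U α X) 0 ≫ g') : g = g' := by
  refine colimit.hom_ext fun n => ?_
  induction n with
  | zero => exact h
  | succ n ih =>
    have restrict (k : colimit (chain U α X) ⟶ Y) :
        α.app _ ≫ colimit.ι (chain U α X) (n + 1) ≫ k = colimit.ι (chain U α X) n ≫ k :=
      (Category.assoc _ _ _).symm.trans (congrArg (· ≫ k) (app_comp_colimit_ι_chain_succ U α X n))
    exact hom_ext_of_isIso_app α (hwp _) ((restrict g).trans (ih.trans (restrict g').symm))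

lemma tUnit_comp_Tmap {X Y : C} (f : X ⟶ Y) :
    tUnit U α X ≫ Tmap U α f = f ≫ tUnit U α Y :=
  ι_colimMap (chainMap U α f) 0

end Localization

theorem stmt5_general (U : C ⥤ C) (α : 𝟭 C ⟶ U)
    (hwp : ∀ X : C, U.map (α.app X) = α.app (U.obj X)) (X Y : C)
    (hY : IsIso (tUnit U α Y)) :
    Function.Bijective (fun g : Tobj U α X ⟶ Y => tUnit U α X ≫ g) := by
  have : IsIso (α.app Y) := isIso_app_of_isIso_tUnit U α (hwp Y) hY
  refine ⟨fun g g' h => colimit_chain_hom_ext U α hwp h, fun f => ?_⟩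
  refine ⟨Tmap U α f ≫ inv (tUnit U α Y), ?_⟩
  dsimp only
  rw [← Category.assoc, tUnit_comp_Tmap, Category.assoc, IsIso.hom_inv_id, Category.comp_id]

/-- `T` exhibits a reflective localization of `C` onto the `ι`-local objects:
for every `X` and every `Y` such that `ι.app Y : Y ⟶ T Y` is an isomorphism,
precomposition with `ι.app X` gives a bijection `Hom(T X, Y) ≃ Hom(X, Y)`. -/
theorem stmt5 (U : C ⥤ C) (α : 𝟭 C ⟶ U)
    [PreservesColimitsOfShape ℕ U]
    (hwp : ∀ X : C, U.map (α.app X) = α.app (U.obj X)) (X Y : C)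
    (hY : IsIso (tUnit U α Y)) :
    Function.Bijective (fun g : Tobj U α X ⟶ Y => tUnit U α X ≫ g) :=
  stmt5_general U α hwp X Y hY
end
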